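/- arXiv:1512.08494 — 4 statements merged into one kernel-verified Lean document; each statement's English description precedes it below -/
import Mathlib

section
/- Let n, k ∈ ℕ with 2 ≤ k ≤ n−2 and let 𝒫 = (P,w) be a weighted tree with leaf set [n]. If the leaves i and l are neighbours, then the value D_{{i}∪X}(𝒫) − D_{{l}∪X}(𝒫) does not depend on the choice of the (k−1)-subset X of [n]−{i,l}. -/
/-- A weighted finite tree with leaf set labelled by `Fin n`:
a finite vertex type `V`, a tree `G` on `V`, an injective labelling `leaf` of the
degree-one vertices by `Fin n` (every vertex of degree one is a labelled leaf),
and a weight function `w` on edges (zero off the edge set). -/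
structure WTree (n : ℕ) where
  V : Type
  fintypeV : Fintype V
  G : SimpleGraph V
  isTree : G.IsTree
  leaf : Fin n → V
  leafInj : Function.Injective leaf
  leafSpec : ∀ v : V, (G.neighborSet v).ncard = 1 ↔ v ∈ Set.range leaf
  w : Sym2 V → ℝ
  wSupport : ∀ e, e ∉ G.edgeSet → w e = 0

namespace WTree

variable {n : ℕ}

/-- The degree of a vertex. -/
noncomputable def deg (T : WTree n) (v : T.V) : ℕ := (T.G.neighborSet v).ncard

/-- A node is a vertex of degree `> 2`. -/
def IsNode (T : WTree n) (v : T.V) : Prop := 2 < T.deg v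

/-- A tree is essential if it has no vertices of degree `2`. -/
def Essential (T : WTree n) : Prop := ∀ v : T.V, T.deg v ≠ 2

/-- The set of edges lying on the path between two vertices. -/
def pathEdges (T : WTree n) (u v : T.V) : Set (Sym2 T.V) :=
  {e | ∃ p : T.G.Walk u v, p.IsPath ∧ e ∈ p.edges}

/-- The edge set of the minimal subtree containing the leaves in `S`. -/
def subtreeEdges (T : WTree n) (S : Set (Fin n)) : Set (Sym2 T.V) :=
  {e | ∃ i ∈ S, ∃ j ∈ S, e ∈ T.pathEdges (T.leaf i) (T.leaf j)}

/-- `D_I(T)`: the weight of the minimal subtree of `T` containing the leaves in `I`. -/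
noncomputable def D (T : WTree n) (I : Finset (Fin n)) : ℝ :=
  ∑ᶠ e ∈ T.subtreeEdges ↑I, T.w e

/-- The total weight of the tree. -/
noncomputable def Dtot (T : WTree n) : ℝ := ∑ᶠ e ∈ T.G.edgeSet, T.w e

/-- An edge is a twig edge if it lies on the path from some leaf to the nearest node. -/
def IsTwigEdge (T : WTree n) (e : Sym2 T.V) : Prop :=
  ∃ (i : Fin n) (v : T.V), T.IsNode v ∧
    ∃ p : T.G.Walk (T.leaf i) v, p.IsPath ∧
      (∀ u ∈ p.support, T.IsNode u → u = v) ∧ e ∈ p.edges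

/-- Internal-nonzero-weighted: every internal (non-twig) edge has nonzero weight. -/
def InternalNonzero (T : WTree n) : Prop :=
  ∀ e ∈ T.G.edgeSet, ¬ T.IsTwigEdge e → T.w e ≠ 0

/-- Positive-weighted: all edge weights are positive. -/
def PositiveWeighted (T : WTree n) : Prop := ∀ e ∈ T.G.edgeSet, 0 < T.w e

/-- The leaves lying on the side of vertex `a` after removing the edge `e`. -/
def sideLeaves (T : WTree n) (e : Sym2 T.V) (a : T.V) : Set (Fin n) :=
  {i | e ∉ T.pathEdges (T.leaf i) a}

/-- A pseudostar of kind `(n, k)`: every edge divides the leaf set into two parts,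
at least one of which has cardinality `≥ k`. -/
def IsPseudostar (T : WTree n) (k : ℕ) : Prop :=
  ∀ a b : T.V, T.G.Adj a b →
    k ≤ (T.sideLeaves s(a, b) a).ncard ∨ k ≤ (T.sideLeaves s(a, b) b).ncard

/-- `T` realizes the family `D₀` of `k`-weights. -/
def Realizes (T : WTree n) (k : ℕ) (D₀ : Finset (Fin n) → ℝ) : Prop :=
  ∀ I : Finset (Fin n), I.card = k → T.D I = D₀ I

/-- Two leaves are neighbours if the path between them contains exactly one node. -/
def Neighbours (T : WTree n) (i j : Fin n) : Prop :=
  i ≠ j ∧ ∃ p : T.G.Walk (T.leaf i) (T.leaf j), p.IsPath ∧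
    ∃! v : T.V, v ∈ p.support ∧ T.IsNode v

/-- The Buneman index `⟨i,j | l,m⟩` holds iff the paths `i–j` and `l–m` are disjoint,
equivalently in `T|_{i,j,l,m}` the leaves `i,j` are neighbours, `l,m` are neighbours
and `i,l` are not neighbours. -/
def Buneman (T : WTree n) (i j l m : Fin n) : Prop :=
  ∀ (p : T.G.Walk (T.leaf i) (T.leaf j)) (q : T.G.Walk (T.leaf l) (T.leaf m)),
    p.IsPath → q.IsPath → ∀ v : T.V, v ∈ p.support → v ∉ q.support

/-- The minimal subtree spanned by the four leaves `i,j,l,m` is a star (i.e. all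
pairwise paths share a common vertex). -/
def StarQuartet (T : WTree n) (i j l m : Fin n) : Prop :=
  ∃ c : T.V, ∀ x ∈ ({i, j, l, m} : Set (Fin n)), ∀ y ∈ ({i, j, l, m} : Set (Fin n)),
    x ≠ y → ∀ p : T.G.Walk (T.leaf x) (T.leaf y), p.IsPath → c ∈ p.support

/-- A cherry: a set of leaves pairwise neighbours. -/
def IsCherry (T : WTree n) (C : Set (Fin n)) : Prop :=
  ∀ i ∈ C, ∀ j ∈ C, i ≠ j → T.Neighbours i j

/-- A complete cherry: a cherry not strictly contained in another cherry. -/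
def IsCompleteCherry (T : WTree n) (C : Set (Fin n)) : Prop :=
  T.IsCherry C ∧ ¬ ∃ C' : Set (Fin n), T.IsCherry C' ∧ C ⊂ C'

/-- A star is a tree with only one node. -/
def IsStar (T : WTree n) : Prop := ∃! v : T.V, T.IsNode v

/-- `x` is the median of the three leaves `a,b,c`: it lies on all three pairwise paths. -/
def IsMedian (T : WTree n) (a b c : Fin n) (x : T.V) : Prop :=
  (∀ p : T.G.Walk (T.leaf a) (T.leaf b), p.IsPath → x ∈ p.support) ∧
  (∀ p : T.G.Walk (T.leaf a) (T.leaf c), p.IsPath → x ∈ p.support) ∧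
  (∀ p : T.G.Walk (T.leaf b) (T.leaf c), p.IsPath → x ∈ p.support)

/-- The weight of the twig associated to the leaf `i` (the path from the leaf to the
nearest node). -/
noncomputable def twigWeight (T : WTree n) (i : Fin n) : ℝ :=
  ∑ᶠ e ∈ {e : Sym2 T.V | ∃ v : T.V, T.IsNode v ∧
      ∃ p : T.G.Walk (T.leaf i) v, p.IsPath ∧
        (∀ u ∈ p.support, T.IsNode u → u = v) ∧ e ∈ p.edges}, T.w e

/-- Two weighted trees with leaf set `Fin n` are equal (isomorphic respecting the
leaf labels and the weights). -/
def Isom (T T' : WTree n) : Prop :=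
  ∃ φ : T.V ≃ T'.V,
    (∀ a b : T.V, T.G.Adj a b ↔ T'.G.Adj (φ a) (φ b)) ∧
    (∀ i : Fin n, φ (T.leaf i) = T'.leaf i) ∧
    (∀ a b : T.V, T.w s(a, b) = T'.w s(φ a, φ b))

/-- `T'` is obtained from `T` by the `k`-IO operation on the edge `{a, b}`:
the edge divides the leaf set into two parts each of cardinality `< k`; it is
contracted (via the quotient map `φ`) and `w{a,b}/k` is added to the weight of
every twig (i.e. to every pendant edge). -/
def IOStepOn (k : ℕ) (T T' : WTree n) (a b : T.V) : Prop :=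
  T.G.Adj a b ∧
  (T.sideLeaves s(a, b) a).ncard < k ∧ (T.sideLeaves s(a, b) b).ncard < k ∧
  ∃ φ : T.V → T'.V,
    Function.Surjective φ ∧ φ a = φ b ∧
    (∀ x y : T.V, φ x = φ y → x = y ∨ s(x, y) = s(a, b)) ∧
    (∀ i : Fin n, φ (T.leaf i) = T'.leaf i) ∧
    (∀ u v : T'.V, T'.G.Adj u v ↔
      ∃ x y : T.V, φ x = u ∧ φ y = v ∧ T.G.Adj x y ∧ s(x, y) ≠ s(a, b)) ∧
    (∀ x y : T.V, T.G.Adj x y → s(x, y) ≠ s(a, b) →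
      ((∃ i : Fin n, T.leaf i = x ∨ T.leaf i = y) →
        T'.w s(φ x, φ y) = T.w s(x, y) + T.w s(a, b) / k) ∧
      (¬ (∃ i : Fin n, T.leaf i = x ∨ T.leaf i = y) →
        T'.w s(φ x, φ y) = T.w s(x, y)))

/-- `T'` is obtained from `T` by a `k`-IO operation. -/
def IOStep (k : ℕ) (T T' : WTree n) : Prop := ∃ a b : T.V, IOStepOn k T T' a b

/-- `T'` is obtained from `T` by a `k`-OI operation (the inverse of a `k`-IO operation). -/
def OIStep (k : ℕ) (T T' : WTree n) : Prop := IOStep k T' T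

/-- `T'` is obtained from `T` by inserting an internal edge of weight `0`
(the inverse of contracting it). -/
def InsertZeroStep (T T' : WTree n) : Prop :=
  ∃ a b : T'.V, T'.G.Adj a b ∧ ¬ T'.IsTwigEdge s(a, b) ∧ T'.w s(a, b) = 0 ∧
    ∃ φ : T'.V → T.V,
      Function.Surjective φ ∧ φ a = φ b ∧
      (∀ x y : T'.V, φ x = φ y → x = y ∨ s(x, y) = s(a, b)) ∧
      (∀ i : Fin n, φ (T'.leaf i) = T.leaf i) ∧
      (∀ u v : T.V, T.G.Adj u v ↔
        ∃ x y : T'.V, φ x = u ∧ φ y = v ∧ T'.G.Adj x y ∧ s(x, y) ≠ s(a, b)) ∧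
      (∀ x y : T'.V, T'.G.Adj x y → s(x, y) ≠ s(a, b) → T.w s(φ x, φ y) = T'.w s(x, y))

/-- Replace the weight function of `T`. -/
def reweight (T : WTree n) (w' : Sym2 T.V → ℝ)
    (h : ∀ e, e ∉ T.G.edgeSet → w' e = 0) : WTree n :=
  { T with w := w', wSupport := h }

end WTree

/-!
Let `v` be the unique node on the path from `i` to `l`. Every other vertex of that path
has degree at most two, so all its neighbours lie on the path; hence the path from `i` or
`l` to any other leaf leaves it through `v`. For nonempty `X` the subtree spanned by
`{c} ∪ X`, `c ∈ {i, l}`, is therefore the disjoint union of the path from `c` to `v` and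
the subtree spanned by `v` and `X`, and `D_{{i}∪X} − D_{{l}∪X}` is the weight of the path
`i–v` minus that of the path `l–v`.
-/

namespace SimpleGraph.Walk

variable {V : Type*} {G : SimpleGraph V} {a b : V}

lemma IsPath.exists_adj_adj_of_mem_support {p : G.Walk a b} (hp : p.IsPath) {u : V}
    (hu : u ∈ p.support) (ha : u ≠ a) (hb : u ≠ b) :
    ∃ x ∈ p.support, ∃ y ∈ p.support, x ≠ y ∧ G.Adj u x ∧ G.Adj u y := by
  obtain ⟨m, rfl, hm⟩ := mem_support_iff_exists_getVert.mp hu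
  have hm0 : m ≠ 0 := by rintro rfl; exact ha p.getVert_zero
  have hmlen : m < p.length := lt_of_le_of_ne hm (by rintro rfl; exact hb p.getVert_length)
  refine ⟨p.getVert (m - 1), p.getVert_mem_support _, p.getVert (m + 1),
    p.getVert_mem_support _, fun h => ?_, ?_, p.adj_getVert_succ hmlen⟩
  · have := hp.getVert_injOn (by simp only [Set.mem_ofPred_eq]; omega)
      (by simp only [Set.mem_ofPred_eq]; omega) h
    omega
  · have := p.adj_getVert_succ (i := m - 1) (by omega)
    rwa [Nat.sub_add_cancel (Nat.pos_of_ne_zero hm0), G.adj_comm] at this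

lemma mem_support_of_forall_neighborSet_subset {S : Set V} {v : V}
    (hS : ∀ u ∈ S, u ≠ v → G.neighborSet u ⊆ S) (q : G.Walk a b) (ha : a ∈ S)
    (hb : b ∉ S) :
    v ∈ q.support := by
  obtain ⟨d, hd, hfst, hsnd⟩ := q.exists_boundary_dart S ha hb
  by_cases h : d.fst = v
  · exact h ▸ q.dart_fst_mem_support_of_mem_darts hd
  · exact absurd (hS _ hfst h d.adj) hsnd

end SimpleGraph.Walk

namespace WTree

open SimpleGraph Walk

variable {n : ℕ} (T : WTree n)

lemma pathEdges_eq {u w : T.V} {q : T.G.Walk u w} (hq : q.IsPath) :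
    T.pathEdges u w = {e | e ∈ q.edges} := by
  ext e
  refine ⟨fun ⟨q', hq', he⟩ => ?_, fun he => ⟨q, hq, he⟩⟩
  obtain ⟨r, -, hr⟩ := T.isTree.existsUnique_path u w
  rwa [hr q' hq', ← hr q hq] at he

lemma pathEdges_comm (u w : T.V) : T.pathEdges u w = T.pathEdges w u := by
  ext e
  constructor <;> rintro ⟨q, hq, he⟩ <;>
    exact ⟨q.reverse, hq.reverse, by rwa [edges_reverse, List.mem_reverse]⟩

lemma pathEdges_self (u : T.V) : T.pathEdges u u = ∅ := by
  simp [T.pathEdges_eq IsPath.nil]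

lemma pathEdges_subset_union (u w v : T.V) :
    T.pathEdges u w ⊆ T.pathEdges u v ∪ T.pathEdges v w := by
  classical
  obtain ⟨q₁, hq₁, -⟩ := T.isTree.existsUnique_path u v
  obtain ⟨q₂, hq₂, -⟩ := T.isTree.existsUnique_path v w
  rw [T.pathEdges_eq (q₁.append q₂).bypass_isPath, T.pathEdges_eq hq₁, T.pathEdges_eq hq₂]
  intro e he
  simpa [edges_append] using (q₁.append q₂).edges_bypass_subset_edges he

lemma ncard_neighborSet_leaf (i : Fin n) : (T.G.neighborSet (T.leaf i)).ncard = 1 :=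
  (T.leafSpec _).mpr ⟨i, rfl⟩

variable {T}

lemma pathEdges_eq_union_of_mem_support {u w v : T.V} {q : T.G.Walk u w} (hq : q.IsPath)
    (hv : v ∈ q.support) : T.pathEdges u w = T.pathEdges u v ∪ T.pathEdges v w := by
  classical
  rw [T.pathEdges_eq hq, T.pathEdges_eq (hq.takeUntil hv), T.pathEdges_eq (hq.dropUntil hv)]
  ext e
  simp only [Set.mem_union, Set.mem_ofPred_eq]
  rw [← List.mem_append, ← edges_append, q.take_spec hv]

lemma disjoint_pathEdges_of_mem_support {u w v : T.V} {q : T.G.Walk u w} (hq : q.IsPath)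
    (hv : v ∈ q.support) : Disjoint (T.pathEdges u v) (T.pathEdges v w) := by
  classical
  rw [T.pathEdges_eq (hq.takeUntil hv), T.pathEdges_eq (hq.dropUntil hv)]
  exact Set.disjoint_left.mpr fun e h₁ h₂ =>
    hq.isTrail.disjoint_edges_takeUntil_dropUntil hv h₁ h₂

lemma subtreeEdges_insert_eq_union {c : Fin n} {Y : Set (Fin n)} {v : T.V} (hY : Y.Nonempty)
    (hv : ∀ j ∈ Y, ∀ q : T.G.Walk (T.leaf c) (T.leaf j), q.IsPath → v ∈ q.support) :
    T.subtreeEdges (insert c Y) =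
      T.pathEdges (T.leaf c) v ∪ ⋃ j ∈ Y, T.pathEdges v (T.leaf j) := by
  have hsplit : ∀ j ∈ Y, T.pathEdges (T.leaf c) (T.leaf j) =
      T.pathEdges (T.leaf c) v ∪ T.pathEdges v (T.leaf j) := fun j hj => by
    obtain ⟨q, hq, -⟩ := T.isTree.existsUnique_path (T.leaf c) (T.leaf j)
    exact pathEdges_eq_union_of_mem_support hq (hv j hj q hq)
  ext e
  simp only [Set.mem_union, Set.mem_iUnion]
  constructor
  · rintro ⟨a, ha | ha, b, hb | hb, he⟩
    · subst ha hb
      simp [pathEdges_self] at he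
    · subst ha
      rw [hsplit b hb] at he
      exact he.imp_right fun he => ⟨b, hb, he⟩
    · subst hb
      rw [pathEdges_comm, hsplit a ha] at he
      exact he.imp_right fun he => ⟨a, ha, he⟩
    · refine .inr ?_
      rcases T.pathEdges_subset_union _ _ v he with he | he
      · exact ⟨a, ha, by rwa [pathEdges_comm] at he⟩
      · exact ⟨b, hb, he⟩
  · rintro (he | ⟨j, hj, he⟩)
    · obtain ⟨j, hj⟩ := hY
      exact ⟨c, .inl rfl, j, .inr hj, hsplit j hj ▸ .inl he⟩
    · exact ⟨c, .inl rfl, j, .inr hj, hsplit j hj ▸ .inr he⟩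

lemma D_insert_eq_add {c : Fin n} {Y : Finset (Fin n)} {v : T.V} (hY : Y.Nonempty)
    (hv : ∀ j ∈ Y, ∀ q : T.G.Walk (T.leaf c) (T.leaf j), q.IsPath → v ∈ q.support) :
    T.D (insert c Y) = (∑ᶠ e ∈ T.pathEdges (T.leaf c) v, T.w e) +
      ∑ᶠ e ∈ ⋃ j ∈ Y, T.pathEdges v (T.leaf j), T.w e := by
  have := T.fintypeV
  have hdisj : Disjoint (T.pathEdges (T.leaf c) v) (⋃ j ∈ Y, T.pathEdges v (T.leaf j)) :=
    Set.disjoint_iUnion₂_right.mpr fun j hj => by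
      obtain ⟨q, hq, -⟩ := T.isTree.existsUnique_path (T.leaf c) (T.leaf j)
      exact disjoint_pathEdges_of_mem_support hq (hv j hj q hq)
  rw [D, Finset.coe_insert, subtreeEdges_insert_eq_union hY hv]
  exact finsum_mem_union hdisj (Set.toFinite _) (Set.toFinite _)

lemma leaf_notMem_support {i j m : Fin n} {p : T.G.Walk (T.leaf i) (T.leaf j)}
    (hp : p.IsPath) (hmi : m ≠ i) (hmj : m ≠ j) : T.leaf m ∉ p.support := by
  intro hm
  have := T.fintypeV
  obtain ⟨x, -, y, -, hxy, hx, hy⟩ := hp.exists_adj_adj_of_mem_support hm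
    (T.leafInj.ne hmi) (T.leafInj.ne hmj)
  have hle : ({x, y} : Set T.V).ncard ≤ (T.G.neighborSet (T.leaf m)).ncard :=
    Set.ncard_le_ncard (Set.pair_subset hx hy) (Set.toFinite _)
  rw [Set.ncard_pair hxy, T.ncard_neighborSet_leaf] at hle
  omega

lemma neighborSet_subset_support {i j : Fin n} {p : T.G.Walk (T.leaf i) (T.leaf j)}
    (hp : p.IsPath) (hij : i ≠ j) {u : T.V} (hu : u ∈ p.support) (hnode : ¬ T.IsNode u) :
    T.G.neighborSet u ⊆ {x | x ∈ p.support} := by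
  have := T.fintypeV
  have hsub : ∀ s : Set T.V, s ⊆ T.G.neighborSet u → s ⊆ {x | x ∈ p.support} →
      (T.G.neighborSet u).ncard ≤ s.ncard → T.G.neighborSet u ⊆ {x | x ∈ p.support} :=
    fun s hsN hsp hle => (Set.eq_of_subset_of_ncard_le hsN hle (Set.toFinite _)).ge.trans hsp
  have hnil : ¬ p.Nil := fun h => hij (T.leafInj h.eq)
  by_cases hi : u = T.leaf i
  · subst hi
    refine hsub {p.snd} (Set.singleton_subset_iff.mpr (p.adj_snd hnil))
      (Set.singleton_subset_iff.mpr (p.getVert_mem_support 1)) ?_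
    rw [T.ncard_neighborSet_leaf, Set.ncard_singleton]
  by_cases hj : u = T.leaf j
  · subst hj
    refine hsub {p.penultimate} (Set.singleton_subset_iff.mpr (p.adj_penultimate hnil).symm)
      (Set.singleton_subset_iff.mpr (p.getVert_mem_support _)) ?_
    rw [T.ncard_neighborSet_leaf, Set.ncard_singleton]
  obtain ⟨x, hxp, y, hyp, hxy, hx, hy⟩ := hp.exists_adj_adj_of_mem_support hu hi hj
  refine hsub {x, y} (Set.pair_subset hx hy) (Set.pair_subset hxp hyp) ?_
  rw [Set.ncard_pair hxy]
  exact not_lt.mp hnode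

lemma Neighbours.exists_forall_mem_support {i l : Fin n} (h : T.Neighbours i l) :
    ∃ v : T.V, ∀ c ∈ ({i, l} : Set (Fin n)), ∀ j ∉ ({i, l} : Set (Fin n)),
      ∀ q : T.G.Walk (T.leaf c) (T.leaf j), v ∈ q.support := by
  obtain ⟨hil, p, hp, v, -, hvuniq⟩ := h
  refine ⟨v, fun c hc j hj q => q.mem_support_of_forall_neighborSet_subset
    (fun u hu huv =>
      neighborSet_subset_support hp hil hu fun hnode => huv (hvuniq u ⟨hu, hnode⟩))
    ?_ (leaf_notMem_support hp (fun h => hj (.inl h)) fun h => hj (.inr h))⟩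
  rcases hc with rfl | rfl
  · exact p.start_mem_support
  · exact p.end_mem_support

end WTree

theorem statement4_general (n k : ℕ) (h2 : 2 ≤ k)
    (P : WTree n) (i l : Fin n) (hnb : P.Neighbours i l)
    (X X' : Finset (Fin n)) (hX : X.card = k - 1) (hX' : X'.card = k - 1)
    (hiX : i ∉ X) (hlX : l ∉ X) (hiX' : i ∉ X') (hlX' : l ∉ X') :
    P.D (insert i X) - P.D (insert l X) = P.D (insert i X') - P.D (insert l X') := by
  obtain ⟨v, hv⟩ := hnb.exists_forall_mem_support
  have hD : ∀ c ∈ ({i, l} : Set (Fin n)), ∀ Y : Finset (Fin n),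
      Y.card = k - 1 → i ∉ Y → l ∉ Y →
      P.D (insert c Y) = (∑ᶠ e ∈ P.pathEdges (P.leaf c) v, P.w e) +
        ∑ᶠ e ∈ ⋃ j ∈ Y, P.pathEdges v (P.leaf j), P.w e := by
    intro c hc Y hY hiY hlY
    refine WTree.D_insert_eq_add (Finset.card_pos.mp (by omega)) fun j hj q _ => hv c hc j ?_ q
    rintro (rfl | rfl) <;> contradiction
  rw [hD i (.inl rfl) X hX hiX hlX, hD l (.inr rfl) X hX hiX hlX,
    hD i (.inl rfl) X' hX' hiX' hlX', hD l (.inr rfl) X' hX' hiX' hlX']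
  ring

/-- if `2 ≤ k ≤ n-2`, `P` is a weighted tree with leaf set `[n]` and the
leaves `i`, `l` are neighbours, then `D_{{i}∪X}(P) − D_{{l}∪X}(P)` does not depend on the
`(k-1)`-subset `X` of `[n] - {i,l}`. -/
theorem statement4 (n k : ℕ) (h2 : 2 ≤ k) (hk : k ≤ n - 2)
    (P : WTree n) (i l : Fin n) (hnb : P.Neighbours i l)
    (X X' : Finset (Fin n)) (hX : X.card = k - 1) (hX' : X'.card = k - 1)
    (hiX : i ∉ X) (hlX : l ∉ X) (hiX' : i ∉ X') (hlX' : l ∉ X') :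
    P.D (insert i X) - P.D (insert l X) = P.D (insert i X') - P.D (insert l X') :=
  statement4_general n k h2 P i l hnb X X' hX hX' hiX hlX hiX' hlX'
end

section
/- Let n, k ∈ ℕ with 2 ≤ k ≤ n−2, let 𝒫 = (P,w) be a weighted tree with leaf set [n], and let i, j, l, m be distinct leaves. If the Buneman index ⟨i,j | l,m⟩ holds, or if the minimal subtree P|_{i,j,l,m} is a star (a tree with only one node), then D_{{i,m}∪R}(𝒫) + D_{{j,l}∪R}(𝒫) = D_{{i,l}∪R}(𝒫) + D_{{j,m}∪R}(𝒫) for every (k−2)-subset R of [n]−{i,j,l,m}. -/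
open SimpleGraph

section TreeAux

variable {V : Type} {G : SimpleGraph V}

/-- In a tree, an edge lies on the (unique) path from `u` to `v` iff `u` and `v` are not
reachable after deleting the edge. -/
lemma tree_sep_iff (hT : G.IsTree) (e : Sym2 V) (u v : V) :
    (∃ p : G.Walk u v, p.IsPath ∧ e ∈ p.edges) ↔ ¬(G.deleteEdges {e}).Reachable u v := by
  classical
  constructor
  · rintro ⟨p, hp, hep⟩ ⟨q⟩
    let q₀ : (G.deleteEdges {e}).Walk u v := (q.toPath : (G.deleteEdges {e}).Path u v).1
    have hq₀ : q₀.IsPath := (q.toPath).2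
    have hsub : ∀ f ∈ q₀.edges, f ∈ G.edgeSet := by
      intro f hf
      have := q₀.edges_subset_edgeSet hf
      rw [G.edgeSet_deleteEdges] at this
      exact this.1
    have hq₁ : (q₀.transfer G hsub).IsPath := hq₀.transfer hsub
    obtain ⟨r, hr, hu⟩ := hT.existsUnique_path u v
    have hpq : p = q₀.transfer G hsub := (hu p hp).trans (hu _ hq₁).symm
    rw [hpq, Walk.edges_transfer] at hep
    have := q₀.edges_subset_edgeSet hep
    rw [G.edgeSet_deleteEdges] at this
    exact this.2 rfl
  · intro hnr
    obtain ⟨r, hr, -⟩ := hT.existsUnique_path u v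
    refine ⟨r, hr, ?_⟩
    by_contra he
    exact hnr ⟨r.toDeleteEdges {e} (by
      intro f hf
      simp only [Set.mem_singleton_iff]
      rintro rfl
      exact he hf)⟩

lemma tree_side_total (hT : G.IsTree) {a b : V} (hab : G.Adj a b) (u : V) :
    (G.deleteEdges {s(a, b)}).Reachable u a ∨ (G.deleteEdges {s(a, b)}).Reachable u b := by
  classical
  obtain ⟨p, hp, -⟩ := hT.existsUnique_path u a
  by_cases he : s(a, b) ∈ p.edges
  · right
    have hb : b ∈ p.support := p.snd_mem_support_of_mem_edges he
    have hq : (p.takeUntil b hb).IsPath := hp.takeUntil hb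
    have hna : a ∉ (p.takeUntil b hb).support := by
      intro ha
      have hnodup := hp.support_nodup
      rw [← p.take_spec hb, Walk.support_append] at hnodup
      have ha2 : a ∈ (p.dropUntil b hb).support := Walk.end_mem_support _
      rw [Walk.support_eq_cons] at ha2
      rcases List.mem_cons.mp ha2 with h1 | h2
      · exact hab.ne h1
      · exact (List.disjoint_of_nodup_append hnodup) ha h2
    have hne : s(a, b) ∉ (p.takeUntil b hb).edges := fun h' =>
      hna ((p.takeUntil b hb).fst_mem_support_of_mem_edges h')
    exact ⟨(p.takeUntil b hb).toDeleteEdges {s(a, b)} (by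
      intro f hf
      simp only [Set.mem_singleton_iff]
      rintro rfl
      exact hne hf)⟩
  · left
    exact ⟨p.toDeleteEdges {s(a, b)} (by
      intro f hf
      simp only [Set.mem_singleton_iff]
      rintro rfl
      exact he hf)⟩

lemma tree_reach_iff (hT : G.IsTree) {a b : V} (hab : G.Adj a b) (u v : V) :
    (G.deleteEdges {s(a, b)}).Reachable u v ↔
      ((G.deleteEdges {s(a, b)}).Reachable u b ↔ (G.deleteEdges {s(a, b)}).Reachable v b) := by
  constructor
  · intro h
    exact ⟨fun h1 => (h.symm.trans h1), fun h2 => h.trans h2⟩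
  · intro hiff
    by_cases h1 : (G.deleteEdges {s(a, b)}).Reachable u b
    · exact h1.trans (hiff.mp h1).symm
    · have hu : (G.deleteEdges {s(a, b)}).Reachable u a := (tree_side_total hT hab u).resolve_right h1
      have hv : (G.deleteEdges {s(a, b)}).Reachable v a :=
        (tree_side_total hT hab v).resolve_right (fun h2 => h1 (hiff.mpr h2))
      exact hu.trans hv.symm

lemma sep_split (hT : G.IsTree) {x y c : V} {e : Sym2 V}
    (h : ∃ p : G.Walk x y, p.IsPath ∧ e ∈ p.edges)
    (hc : ∀ p : G.Walk x y, p.IsPath → c ∈ p.support) :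
    (∃ p : G.Walk x c, p.IsPath ∧ e ∈ p.edges) ∨ (∃ p : G.Walk y c, p.IsPath ∧ e ∈ p.edges) := by
  classical
  obtain ⟨p, hp, hep⟩ := h
  have hcp := hc p hp
  rw [← p.take_spec hcp, Walk.edges_append] at hep
  rcases List.mem_append.mp hep with h1 | h2
  · exact Or.inl ⟨p.takeUntil c hcp, hp.takeUntil hcp, h1⟩
  · refine Or.inr ⟨(p.dropUntil c hcp).reverse, (hp.dropUntil hcp).reverse, ?_⟩
    rw [Walk.edges_reverse, List.mem_reverse]
    exact h2

lemma star_disjoint (hT : G.IsTree) {x y c : V} {e : Sym2 V}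
    (hc : ∀ p : G.Walk x y, p.IsPath → c ∈ p.support)
    (hx : ∃ p : G.Walk x c, p.IsPath ∧ e ∈ p.edges)
    (hy : ∃ p : G.Walk y c, p.IsPath ∧ e ∈ p.edges) : False := by
  classical
  obtain ⟨r, hr, -⟩ := hT.existsUnique_path x y
  have hcr := hc r hr
  obtain ⟨p1, hp1, he1⟩ := hx
  obtain ⟨p2, hp2, he2⟩ := hy
  have e1 : e ∈ (r.takeUntil c hcr).edges := by
    obtain ⟨s1, hs1, hu1⟩ := hT.existsUnique_path x c
    have : p1 = r.takeUntil c hcr := (hu1 p1 hp1).trans (hu1 _ (hr.takeUntil hcr)).symm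
    rwa [this] at he1
  have e2 : e ∈ (r.dropUntil c hcr).edges := by
    obtain ⟨s2, hs2, hu2⟩ := hT.existsUnique_path y c
    have : p2 = (r.dropUntil c hcr).reverse := (hu2 p2 hp2).trans (hu2 _ (hr.dropUntil hcr).reverse).symm
    rw [this, Walk.edges_reverse, List.mem_reverse] at he2
    exact he2
  have hnodup : r.edges.Nodup := Walk.edges_nodup_of_support_nodup hr.support_nodup
  rw [← r.take_spec hcr, Walk.edges_append] at hnodup
  exact (List.disjoint_of_nodup_append hnodup) e1 e2

end TreeAux

section MainAux

lemma ind_congr {α : Type*} {S1 S2 : Set α} (f : α → ℝ) {x : α} (h : x ∈ S1 ↔ x ∈ S2) :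
    Set.indicator S1 f x = Set.indicator S2 f x := by
  classical
  rw [Set.indicator_apply, Set.indicator_apply, if_congr h rfl rfl]

lemma exists_insert_iff {α : Type*} [DecidableEq α] {x y : α} {R : Finset α} (p : α → Prop) :
    (∃ u ∈ (↑(insert x (insert y R)) : Set α), p u) ↔ (p x ∨ p y ∨ ∃ z ∈ R, p z) := by
  classical
  simp only [Finset.coe_insert, Set.mem_insert_iff, Finset.mem_coe]
  constructor
  · rintro ⟨u, (rfl | rfl | hu), h⟩
    exacts [Or.inl h, Or.inr (Or.inl h), Or.inr (Or.inr ⟨u, hu, h⟩)]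
  · rintro (h | h | ⟨z, hz, h⟩)
    exacts [⟨x, Or.inl rfl, h⟩, ⟨y, Or.inr (Or.inl rfl), h⟩, ⟨z, Or.inr (Or.inr hz), h⟩]

lemma key_iff {pi pj pl pm r1 r0 : Prop} (h : (pi ↔ pj) ∨ (pl ↔ pm)) :
    ((((pi ∨ pm ∨ r1) ∧ (¬pi ∨ ¬pm ∨ r0)) ↔ ((pj ∨ pm ∨ r1) ∧ (¬pj ∨ ¬pm ∨ r0))) ∧
     (((pj ∨ pl ∨ r1) ∧ (¬pj ∨ ¬pl ∨ r0)) ↔ ((pi ∨ pl ∨ r1) ∧ (¬pi ∨ ¬pl ∨ r0)))) ∨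
    ((((pi ∨ pm ∨ r1) ∧ (¬pi ∨ ¬pm ∨ r0)) ↔ ((pi ∨ pl ∨ r1) ∧ (¬pi ∨ ¬pl ∨ r0))) ∧
     (((pj ∨ pl ∨ r1) ∧ (¬pj ∨ ¬pl ∨ r0)) ↔ ((pj ∨ pm ∨ r1) ∧ (¬pj ∨ ¬pm ∨ r0)))) := by
  rcases h with h | h
  · exact Or.inl ⟨by tauto, by tauto⟩
  · exact Or.inr ⟨by tauto, by tauto⟩

lemma mem_subtree_iff {n : ℕ} (T : WTree n) {a b : T.V} (hab : T.G.Adj a b) (S : Set (Fin n)) :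
    s(a, b) ∈ T.subtreeEdges S ↔
      (∃ x ∈ S, (T.G.deleteEdges {s(a, b)}).Reachable (T.leaf x) b) ∧
      (∃ x ∈ S, ¬ (T.G.deleteEdges {s(a, b)}).Reachable (T.leaf x) b) := by
  have hT := T.isTree
  constructor
  · rintro ⟨x, hx, y, hy, hp⟩
    have hnr : ¬ (T.G.deleteEdges {s(a, b)}).Reachable (T.leaf x) (T.leaf y) :=
      (tree_sep_iff hT _ _ _).mp hp
    rw [tree_reach_iff hT hab] at hnr
    by_cases hx' : (T.G.deleteEdges {s(a, b)}).Reachable (T.leaf x) b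
    · refine ⟨⟨x, hx, hx'⟩, ⟨y, hy, fun hy' => hnr ⟨fun _ => hy', fun _ => hx'⟩⟩⟩
    · refine ⟨⟨y, hy, ?_⟩, ⟨x, hx, hx'⟩⟩
      by_contra hy'
      exact hnr ⟨fun h' => absurd h' hx', fun h' => absurd h' hy'⟩
  · rintro ⟨⟨x, hx, hx'⟩, ⟨y, hy, hy'⟩⟩
    refine ⟨x, hx, y, hy, (tree_sep_iff hT _ _ _).mpr ?_⟩
    rw [tree_reach_iff hT hab]
    exact fun hiff => hy' (hiff.mp hx')

end MainAux

/-- if `2 ≤ k ≤ n-2`, `P` is a weighted tree with leaf set `[n]`,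
`i,j,l,m` are distinct leaves and either `⟨i,j | l,m⟩` holds or `P|_{i,j,l,m}` is a star,
then `D_{{i,m}∪R} + D_{{j,l}∪R} = D_{{i,l}∪R} + D_{{j,m}∪R}` for every `(k-2)`-subset `R`
of `[n] - {i,j,l,m}`. -/
theorem statement6 (n k : ℕ) (h2 : 2 ≤ k) (hk : k ≤ n - 2)
    (P : WTree n) (i j l m : Fin n)
    (hcard : ({i, j, l, m} : Finset (Fin n)).card = 4)
    (h : P.Buneman i j l m ∨ P.StarQuartet i j l m)
    (R : Finset (Fin n)) (hR : R.card = k - 2)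
    (hdisj : Disjoint R ({i, j, l, m} : Finset (Fin n))) :
    P.D (insert i (insert m R)) + P.D (insert j (insert l R)) =
      P.D (insert i (insert l R)) + P.D (insert j (insert m R)) := by
  classical
  haveI : Fintype P.V := P.fintypeV
  haveI : Finite (Sym2 P.V) := inferInstance
  have hT := P.isTree
  -- distinctness of the four leaves
  have card3 : ∀ a b c : Fin n, ({a, b, c} : Finset (Fin n)).card ≤ 3 := by
    intro a b c
    calc ({a, b, c} : Finset (Fin n)).card ≤ ({b, c} : Finset (Fin n)).card + 1 :=
          Finset.card_insert_le _ _
      _ ≤ (({c} : Finset (Fin n)).card + 1) + 1 :=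
          Nat.add_le_add_right (Finset.card_insert_le _ _) 1
      _ = 3 := by simp
  have hsub : ∀ a b c : Fin n, ¬ (({i, j, l, m} : Finset (Fin n)) ⊆ {a, b, c}) := by
    intro a b c hsubset
    have hc1 := Finset.card_le_card hsubset
    have hc2 := card3 a b c
    omega
  have hij : i ≠ j := by rintro rfl; exact hsub i l m (by intro x hx; simp at hx ⊢; tauto)
  have hil : i ≠ l := by rintro rfl; exact hsub i j m (by intro x hx; simp at hx ⊢; tauto)
  have him : i ≠ m := by rintro rfl; exact hsub i j l (by intro x hx; simp at hx ⊢; tauto)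
  have hjl : j ≠ l := by rintro rfl; exact hsub i j m (by intro x hx; simp at hx ⊢; tauto)
  have hjm : j ≠ m := by rintro rfl; exact hsub i j l (by intro x hx; simp at hx ⊢; tauto)
  have hlm : l ≠ m := by rintro rfl; exact hsub i j l (by intro x hx; simp at hx ⊢; tauto)
  -- key separation fact
  have hkey : ∀ e : Sym2 P.V,
      ¬ (e ∈ P.pathEdges (P.leaf i) (P.leaf j) ∧ e ∈ P.pathEdges (P.leaf l) (P.leaf m)) := by
    rcases h with hB | hS
    · rintro e ⟨h1, h2⟩
      obtain ⟨p, hp, hep⟩ := h1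
      obtain ⟨q, hq, heq⟩ := h2
      induction e using Sym2.ind with
      | _ a b =>
        exact hB p q hp hq a (p.fst_mem_support_of_mem_edges hep)
          (q.fst_mem_support_of_mem_edges heq)
    · obtain ⟨c, hc⟩ := hS
      rintro e ⟨h1, h2⟩
      have hcij : ∀ p : P.G.Walk (P.leaf i) (P.leaf j), p.IsPath → c ∈ p.support :=
        fun p hp => hc i (by simp) j (by simp) hij p hp
      have hclm : ∀ p : P.G.Walk (P.leaf l) (P.leaf m), p.IsPath → c ∈ p.support :=
        fun p hp => hc l (by simp) m (by simp) hlm p hp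
      rcases sep_split hT h1 hcij with hx | hx <;> rcases sep_split hT h2 hclm with hy | hy
      · exact star_disjoint hT (fun p hp => hc i (by simp) l (by simp) hil p hp) hx hy
      · exact star_disjoint hT (fun p hp => hc i (by simp) m (by simp) him p hp) hx hy
      · exact star_disjoint hT (fun p hp => hc j (by simp) l (by simp) hjl p hp) hx hy
      · exact star_disjoint hT (fun p hp => hc j (by simp) m (by simp) hjm p hp) hx hy
  -- finsum computation
  rw [WTree.D, WTree.D, WTree.D, WTree.D, finsum_mem_def, finsum_mem_def, finsum_mem_def,
    finsum_mem_def, ← finsum_add_distrib (Set.toFinite _) (Set.toFinite _),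
    ← finsum_add_distrib (Set.toFinite _) (Set.toFinite _)]
  refine finsum_congr fun e => ?_
  induction e using Sym2.ind with
  | _ a b =>
  by_cases hw : P.w s(a, b) = 0
  · have hz : ∀ S : Set (Sym2 P.V), Set.indicator S P.w s(a, b) = 0 := by
      intro S
      rw [Set.indicator_apply]
      split_ifs <;> simp [hw]
    rw [hz, hz, hz, hz]
  · have he : s(a, b) ∈ P.G.edgeSet := by
      by_contra hce
      exact hw (P.wSupport _ hce)
    have hadj : P.G.Adj a b := P.G.mem_edgeSet.mp he
    have hmem : ∀ x y : Fin n, s(a, b) ∈ P.subtreeEdges ↑(insert x (insert y R)) ↔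
        (((P.G.deleteEdges {s(a, b)}).Reachable (P.leaf x) b ∨
          (P.G.deleteEdges {s(a, b)}).Reachable (P.leaf y) b ∨
          ∃ z ∈ R, (P.G.deleteEdges {s(a, b)}).Reachable (P.leaf z) b) ∧
         (¬ (P.G.deleteEdges {s(a, b)}).Reachable (P.leaf x) b ∨
          ¬ (P.G.deleteEdges {s(a, b)}).Reachable (P.leaf y) b ∨
          ∃ z ∈ R, ¬ (P.G.deleteEdges {s(a, b)}).Reachable (P.leaf z) b)) := by
      intro x y
      rw [mem_subtree_iff P hadj, exists_insert_iff, exists_insert_iff]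
    have hside : ((P.G.deleteEdges {s(a, b)}).Reachable (P.leaf i) b ↔
          (P.G.deleteEdges {s(a, b)}).Reachable (P.leaf j) b) ∨
        ((P.G.deleteEdges {s(a, b)}).Reachable (P.leaf l) b ↔
          (P.G.deleteEdges {s(a, b)}).Reachable (P.leaf m) b) := by
      by_contra hcon
      push_neg at hcon
      obtain ⟨hc1, hc2⟩ := hcon
      refine hkey s(a, b) ⟨?_, ?_⟩
      · refine (tree_sep_iff hT _ _ _).mpr ?_
        rw [tree_reach_iff hT hadj]
        rintro ⟨u1, u2⟩
        rcases hc1 with ⟨v1, v2⟩ | ⟨v1, v2⟩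
        exacts [v2 (u1 v1), v1 (u2 v2)]
      · refine (tree_sep_iff hT _ _ _).mpr ?_
        rw [tree_reach_iff hT hadj]
        rintro ⟨u1, u2⟩
        rcases hc2 with ⟨v1, v2⟩ | ⟨v1, v2⟩
        exacts [v2 (u1 v1), v1 (u2 v2)]
    rcases key_iff (r1 := ∃ z ∈ R, (P.G.deleteEdges {s(a, b)}).Reachable (P.leaf z) b)
        (r0 := ∃ z ∈ R, ¬ (P.G.deleteEdges {s(a, b)}).Reachable (P.leaf z) b) hside with
      ⟨k1, k2⟩ | ⟨k1, k2⟩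
    · rw [ind_congr P.w ((hmem i m).trans (k1.trans (hmem j m).symm)),
        ind_congr P.w ((hmem j l).trans (k2.trans (hmem i l).symm))]
      exact add_comm _ _
    · rw [ind_congr P.w ((hmem i m).trans (k1.trans (hmem i l).symm)),
        ind_congr P.w ((hmem j l).trans (k2.trans (hmem j m).symm))]
end

section
/- Let n, k ∈ ℕ with 3 ≤ k ≤ n−1, let {D_I}, indexed by the k-subsets I of [n], be an l-treelike family of real numbers, and let U be the set of weighted trees with leaf set [n] realizing the family. If U contains a weighted tree that is not a pseudostar of kind (n,k), then the infimum over 𝒯 ∈ U of D_tot(𝒯) is −∞ and the supremum over 𝒯 ∈ U of D_tot(𝒯) is +∞. -/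
theorem SimpleGraph.reachable_deleteEdges_or_of_walk {V : Type*} {G : SimpleGraph V}
    {x a : V} (b : V) (p : G.Walk x a) :
    (G.deleteEdges {s(a, b)}).Reachable x a ∨ (G.deleteEdges {s(a, b)}).Reachable x b := by
  induction p with
  | nil => exact .inl .rfl
  | @cons x y z hxy _ ih =>
    by_cases he : s(x, y) = s(z, b)
    · rcases Sym2.eq_iff.mp he with ⟨rfl, -⟩ | ⟨rfl, -⟩
      · exact .inl .rfl
      · exact .inr .rfl
    · have hadj : (G.deleteEdges {s(z, b)}).Adj x y := by simp [hxy, he]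
      exact ih.imp hadj.reachable.trans hadj.reachable.trans

theorem finsum_mem_indicator_const {α : Type*} {S : Set α} (hS : S.Finite) (A : Set α)
    (c : ℝ) : ∑ᶠ x ∈ S, A.indicator (fun _ => c) x = (S ∩ A).ncard * c := by
  rw [finsum_mem_def, Set.indicator_indicator, ← finsum_mem_def,
    finsum_mem_eq_finite_toFinset_sum _ (hS.inter_of_left A), Finset.sum_const,
    Set.ncard_eq_toFinset_card _ (hS.inter_of_left A), nsmul_eq_mul]

namespace WTree

variable {n : ℕ}

noncomputable instance (T : WTree n) : Fintype T.V := T.fintypeV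

variable (T : WTree n)

theorem exists_isPath (x y : T.V) : ∃ p : T.G.Walk x y, p.IsPath := by
  classical
  obtain ⟨p⟩ := T.isTree.connected.preconnected x y
  exact ⟨p.bypass, p.bypass_isPath⟩

theorem mem_pathEdges_iff {x y : T.V} {e : Sym2 T.V} :
    e ∈ T.pathEdges x y ↔ ¬ (T.G.deleteEdges {e}).Reachable x y := by
  classical
  induction e using Sym2.ind with | h u v => ?_
  rw [SimpleGraph.reachable_deleteEdges_iff_exists_walk]
  constructor
  · rintro ⟨p, hp, hep⟩ ⟨q, hq⟩
    have hpq : p = q.bypass := congrArg Subtype.val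
      ((T.isTree.isAcyclic.subsingleton_path x y).elim ⟨p, hp⟩ ⟨_, q.bypass_isPath⟩)
    exact hq (q.edges_bypass_subset_edges (hpq ▸ hep))
  · intro h
    obtain ⟨p, hp⟩ := T.exists_isPath x y
    exact ⟨p, hp, not_not.mp fun hep => h ⟨p, hep⟩⟩

theorem mem_sideLeaves_iff {e : Sym2 T.V} {a : T.V} {i : Fin n} :
    i ∈ T.sideLeaves e a ↔ (T.G.deleteEdges {e}).Reachable (T.leaf i) a :=
  T.mem_pathEdges_iff.not_left

theorem reachable_deleteEdges_or (a b x : T.V) :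
    (T.G.deleteEdges {s(a, b)}).Reachable x a ∨ (T.G.deleteEdges {s(a, b)}).Reachable x b :=
  SimpleGraph.reachable_deleteEdges_or_of_walk b (T.isTree.connected.preconnected x a).some

theorem not_reachable_deleteEdges_of_adj {a b : T.V} (hab : T.G.Adj a b) :
    ¬ (T.G.deleteEdges {s(a, b)}).Reachable a b :=
  SimpleGraph.isAcyclic_iff_forall_adj_isBridge.mp T.isTree.isAcyclic hab

theorem mem_subtreeEdges_of_sideLeaves_ncard_lt {a b : T.V} (hab : T.G.Adj a b)
    {I : Finset (Fin n)} (ha : (T.sideLeaves s(a, b) a).ncard < I.card)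
    (hb : (T.sideLeaves s(a, b) b).ncard < I.card) : s(a, b) ∈ T.subtreeEdges ↑I := by
  rw [← Set.ncard_coe_finset] at ha hb
  obtain ⟨i, hiI, hib⟩ := Set.exists_mem_notMem_of_ncard_lt_ncard hb
  obtain ⟨j, hjI, hja⟩ := Set.exists_mem_notMem_of_ncard_lt_ncard ha
  rw [mem_sideLeaves_iff] at hib hja
  have hia := (T.reachable_deleteEdges_or a b (T.leaf i)).resolve_right hib
  have hjb := (T.reachable_deleteEdges_or a b (T.leaf j)).resolve_left hja
  refine ⟨i, hiI, j, hjI, (T.mem_pathEdges_iff).mpr fun hij => ?_⟩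
  exact T.not_reachable_deleteEdges_of_adj hab (hia.symm.trans (hij.trans hjb))

theorem exists_neighborSet_leaf_eq_singleton (i : Fin n) :
    ∃ v, T.G.neighborSet (T.leaf i) = {v} :=
  Set.ncard_eq_one.mp ((T.leafSpec (T.leaf i)).mpr ⟨i, rfl⟩)

noncomputable def leafNbr (i : Fin n) : T.V := (T.exists_neighborSet_leaf_eq_singleton i).choose

theorem neighborSet_leaf (i : Fin n) : T.G.neighborSet (T.leaf i) = {T.leafNbr i} :=
  (T.exists_neighborSet_leaf_eq_singleton i).choose_spec

theorem adj_leafNbr (i : Fin n) : T.G.Adj (T.leaf i) (T.leafNbr i) := by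
  rw [← SimpleGraph.mem_neighborSet, neighborSet_leaf]
  rfl

theorem eq_leafNbr_of_adj {i : Fin n} {v : T.V} (h : T.G.Adj (T.leaf i) v) : v = T.leafNbr i := by
  rwa [← SimpleGraph.mem_neighborSet, neighborSet_leaf] at h

noncomputable def pendantEdge (i : Fin n) : Sym2 T.V := s(T.leaf i, T.leafNbr i)

theorem pendantEdge_mem_edgeSet (i : Fin n) : T.pendantEdge i ∈ T.G.edgeSet := T.adj_leafNbr i

theorem not_reachable_deleteEdges_pendantEdge {i : Fin n} {x : T.V} (hx : x ≠ T.leaf i) :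
    ¬ (T.G.deleteEdges {T.pendantEdge i}).Reachable x (T.leaf i) := by
  rintro ⟨p⟩
  cases p.reverse with
  | nil => exact hx rfl
  | cons h _ =>
    rw [SimpleGraph.deleteEdges_adj] at h
    exact h.2 (by rw [T.eq_leafNbr_of_adj h.1]; rfl)

theorem reachable_deleteEdges_pendantEdge_leaf {i j : Fin n} (hji : j ≠ i) :
    (T.G.deleteEdges {T.pendantEdge i}).Reachable (T.leaf j) (T.leafNbr i) :=
  (T.reachable_deleteEdges_or _ _ _).resolve_left
    (T.not_reachable_deleteEdges_pendantEdge (T.leafInj.ne hji))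

theorem pendantEdge_injective (hn : 3 ≤ n) : Function.Injective T.pendantEdge := by
  intro i j hij
  by_contra hne
  have hcard : ({i, j} : Finset (Fin n)).card < (Finset.univ : Finset (Fin n)).card := by
    rw [Finset.card_univ, Fintype.card_fin]
    exact (Finset.card_le_two).trans_lt (by omega)
  obtain ⟨m, -, hm⟩ := Finset.exists_mem_notMem_of_card_lt_card hcard
  simp only [Finset.mem_insert, Finset.mem_singleton, not_or] at hm
  have hnbr : T.leafNbr i = T.leaf j := by
    rcases Sym2.eq_iff.mp hij with ⟨h, -⟩ | ⟨-, h⟩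
    · exact absurd (T.leafInj h) hne
    · exact h
  have hreach := T.reachable_deleteEdges_pendantEdge_leaf hm.1
  rw [hnbr, hij] at hreach
  exact T.not_reachable_deleteEdges_pendantEdge (T.leafInj.ne hm.2) hreach

theorem pendantEdge_mem_subtreeEdges_iff {I : Finset (Fin n)} (hI : 2 ≤ I.card) (i : Fin n) :
    T.pendantEdge i ∈ T.subtreeEdges ↑I ↔ i ∈ I := by
  constructor
  · rintro ⟨j, hj, m, hm, hpath⟩
    by_contra hiI
    refine (T.mem_pathEdges_iff).mp hpath ?_
    exact (T.reachable_deleteEdges_pendantEdge_leaf (ne_of_mem_of_not_mem hj hiI)).trans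
      (T.reachable_deleteEdges_pendantEdge_leaf (ne_of_mem_of_not_mem hm hiI)).symm
  · intro hi
    obtain ⟨j, hj, hji⟩ := Finset.exists_mem_ne hI i
    exact ⟨i, hi, j, hj, (T.mem_pathEdges_iff).mpr fun h =>
      T.not_reachable_deleteEdges_pendantEdge (T.leafInj.ne hji) h.symm⟩

theorem subtreeEdges_inter_range_pendantEdge {I : Finset (Fin n)} (hI : 2 ≤ I.card) :
    T.subtreeEdges ↑I ∩ Set.range T.pendantEdge = T.pendantEdge '' ↑I := by
  ext e
  constructor
  · rintro ⟨he, i, rfl⟩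
    exact ⟨i, (T.pendantEdge_mem_subtreeEdges_iff hI i).mp he, rfl⟩
  · rintro ⟨i, hi, rfl⟩
    exact ⟨(T.pendantEdge_mem_subtreeEdges_iff hI i).mpr hi, i, rfl⟩

noncomputable def redistribute {e : Sym2 T.V} (he : e ∈ T.G.edgeSet) (k : ℕ) (c : ℝ) :
    WTree n :=
  T.reweight (fun f => T.w f - ({e} : Set _).indicator (fun _ => k * c) f +
      (Set.range T.pendantEdge).indicator (fun _ => c) f) <| by
    intro f hf
    have hfe : f ∉ ({e} : Set _) := fun h => hf (Set.mem_singleton_iff.mp h ▸ he)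
    have hfp : f ∉ Set.range T.pendantEdge := by
      rintro ⟨i, rfl⟩
      exact hf (T.pendantEdge_mem_edgeSet i)
    simp [Set.indicator_of_notMem hfe, Set.indicator_of_notMem hfp, T.wSupport f hf]

section Redistribute

variable {T} {e : Sym2 T.V} (he : e ∈ T.G.edgeSet) (k : ℕ) (c : ℝ)

theorem finsum_mem_redistribute_w {S : Set (Sym2 T.V)} (heS : e ∈ S) :
    ∑ᶠ f ∈ S, (T.redistribute he k c).w f =
      ∑ᶠ f ∈ S, T.w f - k * c + (S ∩ Set.range T.pendantEdge).ncard * c := by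
  have hS := Set.toFinite S
  change ∑ᶠ f ∈ S, (_ - _ + _) = _
  rw [finsum_mem_add_distrib hS, finsum_mem_sub_distrib _ _ hS, finsum_mem_indicator_const hS,
    finsum_mem_indicator_const hS, Set.inter_eq_right.mpr (Set.singleton_subset_iff.mpr heS),
    Set.ncard_singleton, Nat.cast_one, one_mul]

theorem D_redistribute (hn : 3 ≤ n) {I : Finset (Fin n)} (hI : 2 ≤ I.card)
    (heI : e ∈ T.subtreeEdges ↑I) :
    (T.redistribute he k c).D I = T.D I + (I.card - k) * c := by
  change ∑ᶠ f ∈ T.subtreeEdges ↑I, (T.redistribute he k c).w f = _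
  rw [finsum_mem_redistribute_w he k c heI, T.subtreeEdges_inter_range_pendantEdge hI,
    Set.ncard_image_of_injective _ (T.pendantEdge_injective hn), Set.ncard_coe_finset, D]
  ring

theorem Dtot_redistribute (hn : 3 ≤ n) :
    (T.redistribute he k c).Dtot = T.Dtot + (n - k) * c := by
  change ∑ᶠ f ∈ T.G.edgeSet, (T.redistribute he k c).w f = _
  rw [finsum_mem_redistribute_w he k c he,
    Set.inter_eq_right.mpr (Set.range_subset_iff.mpr T.pendantEdge_mem_edgeSet),
    Set.ncard_range_of_injective (T.pendantEdge_injective hn), Nat.card_eq_fintype_card,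
    Fintype.card_fin, Dtot]
  ring

end Redistribute

theorem exists_realizes_Dtot_eq {T : WTree n} {k : ℕ} (hk : 2 ≤ k) (hkn : k < n)
    {D₀ : Finset (Fin n) → ℝ} (hT : T.Realizes k D₀) {a b : T.V} (hab : T.G.Adj a b)
    (ha : (T.sideLeaves s(a, b) a).ncard < k) (hb : (T.sideLeaves s(a, b) b).ncard < k)
    (t : ℝ) : ∃ T' : WTree n, T'.Realizes k D₀ ∧ T'.Dtot = t := by
  have hnk : (n : ℝ) - k ≠ 0 := sub_ne_zero.mpr (by exact_mod_cast hkn.ne')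
  have he : s(a, b) ∈ T.G.edgeSet := hab
  refine ⟨T.redistribute he k ((t - T.Dtot) / (n - k)), fun I hI => ?_, ?_⟩
  · subst hI
    have he_mem := T.mem_subtreeEdges_of_sideLeaves_ncard_lt hab ha hb
    rw [D_redistribute he _ _ (by omega) hk he_mem, sub_self, zero_mul, add_zero, hT I rfl]
  · rw [Dtot_redistribute he _ _ (by omega), mul_div_cancel₀ _ hnk]
    ring

end WTree

/-- let `3 ≤ k ≤ n-1`, let `{D_I}` be an l-treelike family of real numbers
and let `U` be the set of weighted trees with leaf set `[n]` realizing the family. If `U`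
contains a tree that is not a pseudostar of kind `(n,k)`, then the infimum of the total
weights over `U` is `-∞` and the supremum is `+∞`. -/
theorem statement13 (n k : ℕ) (h3 : 3 ≤ k) (hk : k ≤ n - 1)
    (D₀ : Finset (Fin n) → ℝ)
    (hD : ∃ T : WTree n, T.Realizes k D₀ ∧ ¬ T.IsPseudostar k) :
    (∀ M : ℝ, ∃ T : WTree n, T.Realizes k D₀ ∧ T.Dtot < M) ∧
    (∀ M : ℝ, ∃ T : WTree n, T.Realizes k D₀ ∧ M < T.Dtot) := by
  obtain ⟨T, hT, hps⟩ := hD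
  simp only [WTree.IsPseudostar, not_forall, not_or, not_le] at hps
  obtain ⟨a, b, hab, ha, hb⟩ := hps
  have hDtot (t : ℝ) := WTree.exists_realizes_Dtot_eq (by omega) (by omega) hT hab ha hb t
  refine ⟨fun M => ?_, fun M => ?_⟩
  · obtain ⟨T', hT', hM⟩ := hDtot (M - 1)
    exact ⟨T', hT', by linarith⟩
  · obtain ⟨T', hT', hM⟩ := hDtot (M + 1)
    exact ⟨T', hT', by linarith⟩
end

section
/- Let n ∈ ℕ with n ≥ 3 and let {D_I}, indexed by the (n−1)-subsets I of [n], be a family of real numbers. Then there exists at most one weighted essential star with leaf set [n] realizing the family {D_I}. -/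
namespace WTree

variable {n : ℕ}

-- auxiliary
lemma deg_leaf (T : WTree n) (i : Fin n) : T.deg (T.leaf i) = 1 :=
  (T.leafSpec _).mpr ⟨i, rfl⟩

lemma nbr_singleton (T : WTree n) {v u : T.V} (h1 : T.deg v = 1)
    (h : T.G.Adj v u) : T.G.neighborSet v = {u} := by
  obtain ⟨x, hx⟩ := Set.ncard_eq_one.mp h1
  have hu : u ∈ T.G.neighborSet v := h
  rw [hx] at hu ⊢
  simp only [Set.mem_singleton_iff] at hu
  rw [hu]

lemma deg_eq_one (T : WTree n) (hess : T.Essential) {c : T.V}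
    (huniq : ∀ v, T.IsNode v → v = c) {v u : T.V} (hv : v ≠ c)
    (h : T.G.Adj v u) : T.deg v = 1 := by
  haveI := T.fintypeV
  have h0 : 0 < T.deg v := (Set.ncard_pos (Set.toFinite _)).mpr ⟨u, h⟩
  have h2 := hess v
  have h3 : ¬ (2 < T.deg v) := fun hh => hv (huniq v hh)
  omega

lemma adj_center (T : WTree n) (hess : T.Essential) {c : T.V}
    (huniq : ∀ v, T.IsNode v → v = c) :
    ∀ v, v ≠ c → T.G.Adj v c := by
  intro v hv
  haveI := Classical.decEq T.V
  obtain ⟨p⟩ := T.isTree.isConnected.preconnected v c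
  obtain ⟨q, hq⟩ : ∃ q : T.G.Walk v c, q.IsPath := ⟨p.bypass, p.bypass_isPath⟩
  cases q with
  | nil => exact absurd rfl hv
  | @cons _ x _ h r =>
    by_cases hx : x = c
    · subst hx; exact h
    · cases r with
      | nil => exact absurd rfl hx
      | @cons _ y _ h' r' =>
        have hdx : T.deg x = 1 := T.deg_eq_one hess huniq hx h'
        have hnx : T.G.neighborSet x = {v} := T.nbr_singleton hdx h.symm
        have hy : y = v := by
          have : y ∈ T.G.neighborSet x := h'
          rw [hnx] at this; exact this
        subst hy
        have hnd := hq.support_nodup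
        simp only [SimpleGraph.Walk.support_cons, List.nodup_cons] at hnd
        exact (hnd.1 (List.mem_cons_of_mem _ r'.start_mem_support)).elim

lemma leaf_ne_center (T : WTree n) {c : T.V} (hc : T.IsNode c) (i : Fin n) :
    T.leaf i ≠ c := by
  intro h
  have := T.deg_leaf i
  rw [h] at this
  unfold IsNode at hc
  omega

lemma exists_leaf (T : WTree n) (hess : T.Essential) {c : T.V}
    (huniq : ∀ v, T.IsNode v → v = c) {v : T.V} (hv : v ≠ c) :
    ∃ i, T.leaf i = v := by
  have h := T.adj_center hess huniq v hv
  obtain ⟨i, hi⟩ := (T.leafSpec v).mp (T.deg_eq_one hess huniq hv h)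
  exact ⟨i, hi⟩

lemma adj_iff (T : WTree n) (hess : T.Essential) {c : T.V}
    (huniq : ∀ v, T.IsNode v → v = c) (a b : T.V) :
    T.G.Adj a b ↔ (a = c ∧ b ≠ c) ∨ (a ≠ c ∧ b = c) := by
  constructor
  · intro h
    by_cases ha : a = c
    · exact Or.inl ⟨ha, fun hb => T.G.ne_of_adj h (ha.trans hb.symm)⟩
    · refine Or.inr ⟨ha, ?_⟩
      have h1 : T.deg a = 1 := T.deg_eq_one hess huniq ha h
      have hn : T.G.neighborSet a = {c} :=
        T.nbr_singleton h1 (T.adj_center hess huniq a ha)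
      have : b ∈ T.G.neighborSet a := h
      rw [hn] at this; exact this
  · rintro (⟨ha, hb⟩ | ⟨ha, hb⟩)
    · subst ha; exact (T.adj_center hess huniq b hb).symm
    · subst hb; exact T.adj_center hess huniq a ha

lemma path_self (T : WTree n) (v : T.V) : T.pathEdges v v = ∅ := by
  ext e
  simp only [pathEdges, Set.mem_setOf_eq, Set.mem_empty_iff_false, iff_false]
  rintro ⟨p, hp, he⟩
  have : p = SimpleGraph.Walk.nil :=
    (T.isTree.existsUnique_path v v).unique hp SimpleGraph.Walk.IsPath.nil
  subst this
  simp at he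

lemma path_eq (T : WTree n) (hess : T.Essential) {c : T.V} (hc : T.IsNode c)
    (huniq : ∀ v, T.IsNode v → v = c) {i j : Fin n} (hij : i ≠ j) :
    T.pathEdges (T.leaf i) (T.leaf j) = {s(T.leaf i, c), s(T.leaf j, c)} := by
  have hi := T.leaf_ne_center hc i
  have hj := T.leaf_ne_center hc j
  have h1 : T.G.Adj (T.leaf i) c := T.adj_center hess huniq _ hi
  have h2 : T.G.Adj c (T.leaf j) := (T.adj_center hess huniq _ hj).symm
  set W : T.G.Walk (T.leaf i) (T.leaf j) :=
    SimpleGraph.Walk.cons h1 (SimpleGraph.Walk.cons h2 SimpleGraph.Walk.nil) with hW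
  have hWp : W.IsPath := by
    rw [hW]
    simp only [SimpleGraph.Walk.isPath_def, SimpleGraph.Walk.support_cons,
      SimpleGraph.Walk.support_nil]
    refine List.nodup_cons.mpr ⟨?_, List.nodup_cons.mpr ⟨?_, List.nodup_singleton _⟩⟩
    · simp only [List.mem_cons, List.mem_singleton]
      rintro (h | h)
      · exact hi h
      · rcases h with h | h
        · exact hij (T.leafInj h)
        · simp at h
    · simp only [List.mem_singleton]
      intro h; exact hj h.symm
  ext e
  simp only [pathEdges, Set.mem_setOf_eq, Set.mem_insert_iff, Set.mem_singleton_iff]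
  constructor
  · rintro ⟨p, hp, he⟩
    have : p = W := (T.isTree.existsUnique_path _ _).unique hp hWp
    subst this
    simp only [hW, SimpleGraph.Walk.edges_cons, SimpleGraph.Walk.edges_nil,
      List.mem_cons, List.mem_singleton] at he
    rcases he with h | h | h
    · exact Or.inl h
    · rw [h]; exact Or.inr (Sym2.eq_swap)
    · simp at h
  · rintro (h | h)
    · exact ⟨W, hWp, by subst h; simp [hW]⟩
    · refine ⟨W, hWp, ?_⟩
      subst h
      simp only [hW, SimpleGraph.Walk.edges_cons, SimpleGraph.Walk.edges_nil]
      rw [Sym2.eq_swap]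
      simp


lemma subtree_eq (T : WTree n) (hess : T.Essential) {c : T.V} (hc : T.IsNode c)
    (huniq : ∀ v, T.IsNode v → v = c) {I : Finset (Fin n)} (hI : 2 ≤ I.card) :
    T.subtreeEdges ↑I = (fun i => s(T.leaf i, c)) '' ↑I := by
  ext e
  simp only [subtreeEdges, Set.mem_setOf_eq, Set.mem_image, Finset.mem_coe]
  constructor
  · rintro ⟨i, hi, j, hj, he⟩
    by_cases hij : i = j
    · subst hij
      rw [T.path_self] at he
      exact he.elim
    · rw [T.path_eq hess hc huniq hij] at he
      rcases he with h | h
      · exact ⟨i, hi, h.symm⟩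
      · exact ⟨j, hj, h.symm⟩
  · rintro ⟨i, hi, rfl⟩
    obtain ⟨j, hj, hij⟩ := Finset.exists_mem_ne (show 1 < I.card by omega) i
    refine ⟨i, hi, j, hj, ?_⟩
    rw [T.path_eq hess hc huniq (Ne.symm hij)]
    exact Or.inl rfl

lemma D_eq (T : WTree n) (hess : T.Essential) {c : T.V} (hc : T.IsNode c)
    (huniq : ∀ v, T.IsNode v → v = c) {I : Finset (Fin n)} (hI : 2 ≤ I.card) :
    T.D I = ∑ i ∈ I, T.w s(T.leaf i, c) := by
  rw [D, T.subtree_eq hess hc huniq hI, finsum_mem_image, finsum_mem_coe_finset]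
  intro i _ j _ h
  rcases Sym2.eq_iff.mp h with ⟨h1, _⟩ | ⟨h1, h2⟩
  · exact T.leafInj h1
  · exact absurd h1 (T.leaf_ne_center hc i)


end WTree

/-- let `n ≥ 3` and let `{D_I}` be a family of real numbers indexed by the
`(n-1)`-subsets of `[n]`. There is at most one weighted essential star with leaf set `[n]`
realizing the family. -/
theorem statement19 (n : ℕ) (hn : 3 ≤ n) (D₀ : Finset (Fin n) → ℝ)
    (T T' : WTree n)
    (hT : T.IsStar ∧ T.Essential ∧ T.Realizes (n - 1) D₀)
    (hT' : T'.IsStar ∧ T'.Essential ∧ T'.Realizes (n - 1) D₀) :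
    T.Isom T' := by
  classical
  obtain ⟨⟨c, hc, huniq⟩, hess, hreal⟩ := hT
  obtain ⟨⟨c', hc', huniq'⟩, hess', hreal'⟩ := hT'
  haveI := T.fintypeV
  haveI := T'.fintypeV
  set t : Fin n → ℝ := fun i => T.w s(T.leaf i, c) with ht
  set t2 : Fin n → ℝ := fun i => T'.w s(T'.leaf i, c') with ht2
  have hcard : ∀ k : Fin n, (Finset.univ.erase k).card = n - 1 := fun k => by
    rw [Finset.card_erase_of_mem (Finset.mem_univ k), Finset.card_univ,
      Fintype.card_fin]
  have hDk : ∀ k, ∑ i ∈ Finset.univ.erase k, t i = D₀ (Finset.univ.erase k) :=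
    fun k => by
      rw [← T.D_eq hess hc huniq (by rw [hcard]; omega)]
      exact hreal _ (hcard k)
  have hDk2 : ∀ k, ∑ i ∈ Finset.univ.erase k, t2 i = D₀ (Finset.univ.erase k) :=
    fun k => by
      rw [← T'.D_eq hess' hc' huniq' (by rw [hcard]; omega)]
      exact hreal' _ (hcard k)
  have hsub : ∀ k, (∑ i, t i) - t k = (∑ i, t2 i) - t2 k := fun k => by
    rw [← Finset.sum_erase_eq_sub (Finset.mem_univ k),
      ← Finset.sum_erase_eq_sub (Finset.mem_univ k), hDk, hDk2]
  have hS : (∑ i, t i) = ∑ i, t2 i := by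
    have h1 : ∑ k : Fin n, ((∑ i, t i) - t k) = ∑ k : Fin n, ((∑ i, t2 i) - t2 k) :=
      Finset.sum_congr rfl fun k _ => hsub k
    simp only [Finset.sum_sub_distrib, Finset.sum_const, Finset.card_univ,
      Fintype.card_fin, nsmul_eq_mul] at h1
    have hn3 : (3 : ℝ) ≤ (n : ℝ) := by exact_mod_cast hn
    have h2 : ((n : ℝ) - 1) * (∑ i, t i) = ((n : ℝ) - 1) * (∑ i, t2 i) := by
      ring_nf
      ring_nf at h1
      linarith
    exact mul_left_cancel₀ (by linarith) h2
  have htt : ∀ k, t k = t2 k := fun k => by have := hsub k; linarith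
  set f : T.V → T'.V := fun v =>
    if h : v = c then c' else T'.leaf (Classical.choose (T.exists_leaf hess huniq h))
    with hf
  have hfc : f c = c' := dif_pos rfl
  have hfleaf : ∀ i, f (T.leaf i) = T'.leaf i := fun i => by
    have hne := T.leaf_ne_center hc i
    rw [hf]
    simp only [dif_neg hne]
    congr 1
    exact T.leafInj (Classical.choose_spec (T.exists_leaf hess huniq hne))
  have hfne : ∀ v (hv : v ≠ c), f v ≠ c' := fun v hv => by
    rw [hf]
    simp only [dif_neg hv]
    exact T'.leaf_ne_center hc' _
  have hinj : Function.Injective f := by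
    intro u v h
    by_cases hu : u = c <;> by_cases hv : v = c
    · rw [hu, hv]
    · rw [hu, hfc] at h; exact absurd h.symm (hfne v hv)
    · rw [hv, hfc] at h; exact absurd h (hfne u hu)
    · obtain ⟨i, rfl⟩ := T.exists_leaf hess huniq hu
      obtain ⟨j, rfl⟩ := T.exists_leaf hess huniq hv
      rw [hfleaf, hfleaf] at h
      rw [T'.leafInj h]
  have hsurj : Function.Surjective f := by
    intro v
    by_cases hv : v = c'
    · exact ⟨c, by rw [hfc, hv]⟩
    · obtain ⟨i, rfl⟩ := T'.exists_leaf hess' huniq' hv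
      exact ⟨T.leaf i, hfleaf i⟩
  have hfiff : ∀ v, f v = c' ↔ v = c := fun v =>
    ⟨fun h => by by_contra hv; exact hfne v hv h, fun h => by rw [h, hfc]⟩
  have hadjiff : ∀ a b : T.V, T.G.Adj a b ↔ T'.G.Adj (f a) (f b) := fun a b => by
    rw [T.adj_iff hess huniq, T'.adj_iff hess' huniq']
    simp only [ne_eq, hfiff]
  have hw : ∀ a b : T.V, T.w s(a, b) = T'.w s(f a, f b) := by
    intro a b
    by_cases hadj : T.G.Adj a b
    · rcases (T.adj_iff hess huniq a b).mp hadj with ⟨ha, hb⟩ | ⟨ha, hb⟩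
      · obtain ⟨i, rfl⟩ := T.exists_leaf hess huniq hb
        rw [ha, hfc, hfleaf]
        rw [show s(c, T.leaf i) = s(T.leaf i, c) from Sym2.eq_swap,
          show s(c', T'.leaf i) = s(T'.leaf i, c') from Sym2.eq_swap]
        exact htt i
      · obtain ⟨i, rfl⟩ := T.exists_leaf hess huniq ha
        rw [hb, hfc, hfleaf]
        exact htt i
    · have hadj' : ¬ T'.G.Adj (f a) (f b) := fun h => hadj ((hadjiff a b).mpr h)
      rw [T.wSupport _ (by rwa [SimpleGraph.mem_edgeSet]),
        T'.wSupport _ (by rwa [SimpleGraph.mem_edgeSet])]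
  exact ⟨Equiv.ofBijective f ⟨hinj, hsurj⟩, hadjiff, hfleaf, hw⟩
end
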